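/- Let γ = W̃_{(r+1):K}ᵀ α (so that α = W̃_{(r+1):K} γ) and let O = W̆_{(r+1):K}ᵀ W̃_{(r+1):K}. There exists an absolute constant C > 0 such that ‖W̆_{(r+1):K}ᵀ P̂_N (Xβ + Xθ + α) − Oγ‖ ≤ (Cτ/min{(1−σ_{r+1})³, σ_{r+s}³}) · ‖Xβ + Xθ + α‖. (The left-hand side is ‖𝔼γ̂ − Oγ‖ for the estimator γ̂ = W̆_{(r+1):K}ᵀ P̂_N Y under the model Y = Xβ + Xθ + α + ε with centered noise ε; the paper states this with ‖Xβ + Xθ + α‖ ≤ C√(np) yielding the bound Cτ√(np)/min{(1−σ_{r+1})³, σ_{r+s}³}.) -/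

import Mathlib

open Matrix

noncomputable def specNorm {m n : Type*} [Fintype m] [Fintype n] [DecidableEq n]
    (A : Matrix m n ℝ) : ℝ :=
  ‖LinearMap.toContinuousLinearMap (Matrix.toEuclideanLin A)‖

noncomputable def vnorm {n : Type*} [Fintype n] (v : n → ℝ) : ℝ :=
  Real.sqrt (∑ i, v i ^ 2)

/-!
Write `Q̂ = Ẑ_{(r+1):p}`, `B̂ = W̆_{(r+1):K}`, `B = W̃_{(r+1):K}` and `m = min(1 - σ_{r+1}, σ_{r+s})`.
In the singular bases `Q̂ᵀB̂` is the rectangular diagonal of `σ̂_{r+1}, σ̂_{r+2}, …`, so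
`M̂ᵀM̂ = [[1, Q̂ᵀB̂], [B̂ᵀQ̂, 1]]` is bounded below by `1 - σ̂_{r+1}`. The projection `P̂_N` kills
`col Z ∋ Xβ + Xθ`, and `B̂ᵀP̂_N α - Oγ` is the second block of the solution of
`M̂ᵀM̂ y = (Q̂ᵀ(WWᵀ - ŴŴᵀ)α, 0)`, whose right-hand side has norm at most `τ‖α‖`.
A min–max argument gives Weyl's bound `σ̂_{r+1}² ≤ σ_{r+1}² + τ`, so the gap condition keeps
`1 - σ̂_{r+1} ≥ 39m/80`. Finally `‖Bᵀx‖ ≤ σ_{r+1}‖x‖` on `col Z`, whence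
`‖Xβ + Xθ + α‖² ≥ (1 - σ_{r+1})‖α‖² ≥ m²‖α‖²`, and the bias is at most
`(80/39) τ ‖Xβ + Xθ + α‖ / m² ≤ 3 τ ‖Xβ + Xθ + α‖ / m³`.
-/

section VectorNorm

variable {ι κ ι' : Type*} [Fintype ι] [Fintype κ] [Fintype ι']

lemma vnorm_eq_norm (v : ι → ℝ) : vnorm v = ‖WithLp.toLp 2 v‖ := by
  simp [EuclideanSpace.norm_eq, vnorm]

lemma vnorm_nonneg (v : ι → ℝ) : 0 ≤ vnorm v := Real.sqrt_nonneg _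

lemma sq_vnorm_eq_sum (v : ι → ℝ) : vnorm v ^ 2 = ∑ i, v i ^ 2 :=
  Real.sq_sqrt (by positivity)

lemma sq_vnorm (v : ι → ℝ) : vnorm v ^ 2 = v ⬝ᵥ v := by
  rw [vnorm, Real.sq_sqrt (by positivity)]
  simp [dotProduct, sq]

@[simp] lemma vnorm_zero : vnorm (0 : ι → ℝ) = 0 := by
  simp [vnorm]

lemma vnorm_pos {v : ι → ℝ} (hv : v ≠ 0) : 0 < vnorm v := by
  rw [vnorm_eq_norm, norm_pos_iff]
  exact fun h => hv (congrArg WithLp.ofLp h)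

lemma vnorm_neg (v : ι → ℝ) : vnorm (-v) = vnorm v := by
  simp [vnorm]

lemma vnorm_add_le (u v : ι → ℝ) : vnorm (u + v) ≤ vnorm u + vnorm v := by
  simpa [vnorm_eq_norm] using norm_add_le (WithLp.toLp 2 u) (WithLp.toLp 2 v)

lemma abs_dotProduct_le (u v : ι → ℝ) : |u ⬝ᵥ v| ≤ vnorm u * vnorm v := by
  have h := abs_real_inner_le_norm (WithLp.toLp 2 v) (WithLp.toLp 2 u)
  rwa [EuclideanSpace.inner_eq_star_dotProduct, star_trivial, ← vnorm_eq_norm, ← vnorm_eq_norm,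
    mul_comm] at h

lemma vnorm_comp_le {f : κ → ι} (hf : Function.Injective f) (v : ι → ℝ) :
    vnorm (v ∘ f) ≤ vnorm v := by
  refine Real.sqrt_le_sqrt ?_
  calc ∑ k, v (f k) ^ 2 = ∑ i ∈ Finset.univ.map ⟨f, hf⟩, v i ^ 2 :=
      (Finset.sum_map Finset.univ ⟨f, hf⟩ fun i => v i ^ 2).symm
    _ ≤ ∑ i, v i ^ 2 :=
      Finset.sum_le_sum_of_subset_of_nonneg (Finset.subset_univ _) fun _ _ _ => sq_nonneg _

lemma sq_vnorm_sumElim (u : ι → ℝ) (v : κ → ℝ) :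
    vnorm (Sum.elim u v) ^ 2 = vnorm u ^ 2 + vnorm v ^ 2 := by
  simp [sq_vnorm, dotProduct, Fintype.sum_sum_type]

lemma vnorm_le_mul_of_sq_le {u : ι → ℝ} {v : κ → ℝ} {c : ℝ} (hc : 0 ≤ c)
    (h : vnorm u ^ 2 ≤ c ^ 2 * vnorm v ^ 2) : vnorm u ≤ c * vnorm v :=
  pow_le_pow_iff_left₀ (vnorm_nonneg u) (by have := vnorm_nonneg v; positivity) two_ne_zero
    |>.mp (by rwa [mul_pow])

lemma mulVec_dotProduct_mulVec (P : Matrix κ ι ℝ) (Q : Matrix κ ι' ℝ) (x : ι → ℝ)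
    (y : ι' → ℝ) : P *ᵥ x ⬝ᵥ Q *ᵥ y = x ⬝ᵥ (Pᵀ * Q) *ᵥ y := by
  rw [dotProduct_mulVec, dotProduct_mulVec, ← vecMul_vecMul, vecMul_transpose]

lemma sq_vnorm_transpose_mulVec (P : Matrix ι κ ℝ) (x : ι → ℝ) :
    vnorm (Pᵀ *ᵥ x) ^ 2 = x ⬝ᵥ (P * Pᵀ) *ᵥ x := by
  rw [sq_vnorm, mulVec_dotProduct_mulVec, transpose_transpose]

end VectorNorm

section OperatorNorm

variable {m k : Type*} [Fintype m] [Fintype k] [DecidableEq k]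

lemma specNorm_nonneg (A : Matrix m k ℝ) : 0 ≤ specNorm A := norm_nonneg _

lemma vnorm_mulVec_le (A : Matrix m k ℝ) (x : k → ℝ) :
    vnorm (A *ᵥ x) ≤ specNorm A * vnorm x := by
  simpa [vnorm_eq_norm, specNorm, toLpLin_apply] using
    (LinearMap.toContinuousLinearMap (toEuclideanLin A)).le_opNorm (WithLp.toLp 2 x)

lemma specNorm_le {A : Matrix m k ℝ} {c : ℝ} (hc : 0 ≤ c)
    (h : ∀ x, vnorm (A *ᵥ x) ≤ c * vnorm x) : specNorm A ≤ c :=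
  ContinuousLinearMap.opNorm_le_bound _ hc fun x => by
    simpa [vnorm_eq_norm, toLpLin_apply] using h x.ofLp

open scoped Matrix.Norms.L2Operator in
lemma specNorm_transpose [DecidableEq m] (A : Matrix m k ℝ) : specNorm Aᵀ = specNorm A := by
  have h := l2_opNorm_conjTranspose A
  rwa [conjTranspose_eq_transpose_of_trivial, l2_opNorm_def, l2_opNorm_def] at h

lemma vnorm_transpose_mulVec_le [DecidableEq m] (A : Matrix m k ℝ) (x : m → ℝ) :
    vnorm (Aᵀ *ᵥ x) ≤ specNorm A * vnorm x :=
  specNorm_transpose A ▸ vnorm_mulVec_le Aᵀ x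

lemma vnorm_mulVec_of_transpose_mul_self {P : Matrix m k ℝ} (hP : Pᵀ * P = 1) (x : k → ℝ) :
    vnorm (P *ᵥ x) = vnorm x := by
  rw [← sq_eq_sq₀ (vnorm_nonneg _) (vnorm_nonneg _), sq_vnorm, sq_vnorm,
    mulVec_dotProduct_mulVec, hP, one_mulVec]

lemma vnorm_transpose_mulVec_of_transpose_mul_self {P : Matrix k k ℝ} (hP : Pᵀ * P = 1)
    (x : k → ℝ) : vnorm (Pᵀ *ᵥ x) = vnorm x :=
  vnorm_mulVec_of_transpose_mul_self (by rw [transpose_transpose, mul_eq_one_comm.mp hP]) x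

lemma le_sq_vnorm_add_mulVec {P : Matrix m k ℝ} (hP : Pᵀ * P = 1) {c : ℝ} (hc : 0 ≤ c)
    {x : m → ℝ} (hx : vnorm (Pᵀ *ᵥ x) ≤ c * vnorm x) (y : k → ℝ) :
    (1 - c) * vnorm y ^ 2 ≤ vnorm (x + P *ᵥ y) ^ 2 := by
  have hexp : vnorm (x + P *ᵥ y) ^ 2 = vnorm x ^ 2 + 2 * (Pᵀ *ᵥ x ⬝ᵥ y) + vnorm y ^ 2 := by
    have h1 : P *ᵥ y ⬝ᵥ P *ᵥ y = y ⬝ᵥ y := by rw [mulVec_dotProduct_mulVec, hP, one_mulVec]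
    have h2 : x ⬝ᵥ P *ᵥ y = Pᵀ *ᵥ x ⬝ᵥ y := by rw [dotProduct_mulVec, mulVec_transpose]
    rw [sq_vnorm, sq_vnorm, sq_vnorm, add_dotProduct, dotProduct_add, dotProduct_add, h1,
      dotProduct_comm (P *ᵥ y) x, h2]
    ring
  have hcross : -(c * vnorm x * vnorm y) ≤ Pᵀ *ᵥ x ⬝ᵥ y :=
    neg_le_of_abs_le ((abs_dotProduct_le _ _).trans
      (mul_le_mul_of_nonneg_right hx (vnorm_nonneg y)))
  rcases le_or_gt c 1 with hc1 | hc1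
  · nlinarith [mul_nonneg hc (sq_nonneg (vnorm x - vnorm y)), sq_nonneg (vnorm x)]
  · nlinarith [sq_nonneg (vnorm y), sq_nonneg (vnorm (x + P *ᵥ y))]

lemma transpose_mul_self_mul {l : Type*} [Fintype l] [DecidableEq l] {P : Matrix m k ℝ}
    {Q : Matrix k l ℝ} (hP : Pᵀ * P = 1) (hQ : Qᵀ * Q = 1) : (P * Q)ᵀ * (P * Q) = 1 := by
  rw [transpose_mul, Matrix.mul_assoc, ← Matrix.mul_assoc Pᵀ, hP, Matrix.one_mul, hQ]

end OperatorNorm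

lemma Fin.sum_ite_val_eq {M : Type*} [AddCommMonoid M] {b : ℕ} (i : ℕ) (g : Fin b → M) :
    ∑ k : Fin b, (if i = (k : ℕ) then g k else 0) = if h : i < b then g ⟨i, h⟩ else 0 := by
  split_ifs with h
  · rw [Finset.sum_eq_single ⟨i, h⟩ (fun k _ hk => if_neg fun e => hk (Fin.ext e.symm))
      (by simp), if_pos rfl]
  · exact Finset.sum_eq_zero fun k _ => if_neg fun e : i = k => h (e ▸ k.2)

section RectDiag

variable (w : ℕ → ℝ) {a b : ℕ}

def rectDiag (w : ℕ → ℝ) (a b : ℕ) : Matrix (Fin a) (Fin b) ℝ :=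
  Matrix.of fun i j => if (i : ℕ) = (j : ℕ) then w i else 0

lemma rectDiag_transpose : (rectDiag w a b)ᵀ = rectDiag w b a := by
  ext i j
  by_cases h : (i : ℕ) = j <;> simp [rectDiag, h, eq_comm]

lemma rectDiag_mulVec_apply (y : Fin b → ℝ) (i : Fin a) :
    (rectDiag w a b *ᵥ y) i = if h : (i : ℕ) < b then w i * y ⟨i, h⟩ else 0 := by
  simp only [mulVec, dotProduct, rectDiag, of_apply, ite_mul, zero_mul]
  exact Fin.sum_ite_val_eq _ fun k => w i * y k

lemma sq_vnorm_rectDiag_mulVec (y : Fin b → ℝ) :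
    vnorm (rectDiag w a b *ᵥ y) ^ 2 = ∑ k : Fin b, if (k : ℕ) < a then (w k * y k) ^ 2 else 0 := by
  rw [sq_vnorm_eq_sum]
  calc ∑ i : Fin a, (rectDiag w a b *ᵥ y) i ^ 2
      = ∑ i : Fin a, ∑ k : Fin b, if (i : ℕ) = k then (w k * y k) ^ 2 else 0 := by
        refine Finset.sum_congr rfl fun i _ => ?_
        rw [rectDiag_mulVec_apply, Fin.sum_ite_val_eq]
        split_ifs <;> simp
    _ = ∑ k : Fin b, ∑ i : Fin a, if (k : ℕ) = i then (w k * y k) ^ 2 else 0 := by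
        rw [Finset.sum_comm]
        simp only [eq_comm]
    _ = ∑ k : Fin b, if (k : ℕ) < a then (w k * y k) ^ 2 else 0 := by
        simp only [Fin.sum_ite_val_eq, dite_eq_ite]

variable {w}

lemma vnorm_rectDiag_mulVec_le {y : Fin b → ℝ} {c : ℝ} (hc : 0 ≤ c)
    (hw : ∀ k : Fin b, y k ≠ 0 → |w k| ≤ c) : vnorm (rectDiag w a b *ᵥ y) ≤ c * vnorm y := by
  refine vnorm_le_mul_of_sq_le hc ?_
  rw [sq_vnorm_rectDiag_mulVec, sq_vnorm_eq_sum, Finset.mul_sum]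
  refine Finset.sum_le_sum fun k _ => ?_
  by_cases hy : y k = 0
  · simp [hy]
  have hwc : w k ^ 2 ≤ c ^ 2 := sq_abs (w k) ▸ pow_le_pow_left₀ (abs_nonneg _) (hw k hy) 2
  split_ifs
  · rw [mul_pow]; gcongr
  · positivity

lemma le_vnorm_rectDiag_mulVec {y : Fin b → ℝ} {c : ℝ}
    (hw : ∀ k : Fin b, y k ≠ 0 → (k : ℕ) < a ∧ c ≤ |w k|) :
    c * vnorm y ≤ vnorm (rectDiag w a b *ᵥ y) := by
  rcases lt_or_ge c 0 with hc | hc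
  · exact (mul_nonpos_of_nonpos_of_nonneg hc.le (vnorm_nonneg _)).trans (vnorm_nonneg _)
  rw [← pow_le_pow_iff_left₀ (by have := vnorm_nonneg y; positivity) (vnorm_nonneg _) two_ne_zero,
    mul_pow, sq_vnorm_rectDiag_mulVec, sq_vnorm_eq_sum, Finset.mul_sum]
  refine Finset.sum_le_sum fun k _ => ?_
  by_cases hy : y k = 0
  · simp [hy]
  obtain ⟨hka, hck⟩ := hw k hy
  have hcw : c ^ 2 ≤ w k ^ 2 := sq_abs (w k) ▸ pow_le_pow_left₀ hc hck 2
  rw [if_pos hka, mul_pow]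
  gcongr

lemma specNorm_rectDiag_le {c : ℝ} (hc : 0 ≤ c) (hw : ∀ t, |w t| ≤ c) :
    specNorm (rectDiag w a b) ≤ c :=
  specNorm_le hc fun _ => vnorm_rectDiag_mulVec_le hc fun k _ => hw k

end RectDiag

section TailColumns

def tailIdx (r a : ℕ) (j : Fin (a - r)) : Fin a := ⟨r + j, by omega⟩

lemma tailIdx_injective (r a : ℕ) : Function.Injective (tailIdx r a) := fun i j h =>
  Fin.ext (by simpa [tailIdx] using congrArg Fin.val h)

/-- The paper's `A_{(r+1):a}`: the columns `r, …, a - 1` of `A` (indices start at `0`). -/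
def tailCols {ι : Type*} (r : ℕ) {a : ℕ} (A : Matrix ι (Fin a) ℝ) : Matrix ι (Fin (a - r)) ℝ :=
  A.submatrix id (tailIdx r a)

lemma tailCols_mul {ι κ : Type*} [Fintype κ] {r a : ℕ} (A : Matrix ι κ ℝ)
    (B : Matrix κ (Fin a) ℝ) : tailCols r (A * B) = A * tailCols r B := rfl

variable {ι : Type*} [Fintype ι] {r a b : ℕ}

lemma tailCols_transpose_mulVec (A : Matrix ι (Fin a) ℝ) (v : ι → ℝ) :
    (tailCols r A)ᵀ *ᵥ v = (Aᵀ *ᵥ v) ∘ tailIdx r a := rfl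

lemma tailCols_transpose_mul_tailCols (A : Matrix ι (Fin a) ℝ) (B : Matrix ι (Fin b) ℝ) :
    (tailCols r A)ᵀ * tailCols r B = (Aᵀ * B).submatrix (tailIdx r a) (tailIdx r b) := rfl

lemma tailCols_transpose_mul_self {A : Matrix ι (Fin a) ℝ} (hA : Aᵀ * A = 1) :
    (tailCols r A)ᵀ * tailCols r A = 1 := by
  rw [tailCols_transpose_mul_tailCols, hA, submatrix_one _ (tailIdx_injective r a)]

variable (w : ℕ → ℝ)

lemma rectDiag_submatrix_tailIdx :
    (rectDiag w a b).submatrix (tailIdx r a) (tailIdx r b)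
      = rectDiag (fun t => w (r + t)) (a - r) (b - r) := by
  ext i j
  simp [rectDiag, tailIdx]

lemma rectDiag_mulVec_comp_tailIdx (y : Fin b → ℝ) :
    (rectDiag w a b *ᵥ y) ∘ tailIdx r a
      = rectDiag (fun t => w (r + t)) (a - r) (b - r) *ᵥ (y ∘ tailIdx r b) := by
  ext j
  simp only [Function.comp_apply, rectDiag_mulVec_apply]
  by_cases h : r + (j : ℕ) < b
  · rw [dif_pos (show (tailIdx r a j : ℕ) < b from h), dif_pos (by omega)]; rfl
  · rw [dif_neg (show ¬(tailIdx r a j : ℕ) < b from h), dif_neg (by omega)]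

end TailColumns

section ObliqueProjection

variable {ι a b : Type*} [Fintype ι] [DecidableEq a] [DecidableEq b]
  {Q : Matrix ι a ℝ} {B : Matrix ι b ℝ} {c : ℝ}

lemma transpose_fromCols_mul_fromCols (hQ : Qᵀ * Q = 1) (hB : Bᵀ * B = 1) :
    (fromCols Q B)ᵀ * fromCols Q B = fromBlocks 1 (Qᵀ * B) (Qᵀ * B)ᵀ 1 := by
  rw [transpose_fromCols, fromRows_mul_fromCols, hQ, hB, transpose_mul, transpose_transpose]

variable [Fintype a] [Fintype b]

lemma le_vnorm_fromBlocks_mulVec {G : Matrix a b ℝ} (hG : specNorm G ≤ c)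
    (y : a ⊕ b → ℝ) : (1 - c) * vnorm y ≤ vnorm (fromBlocks 1 G Gᵀ 1 *ᵥ y) := by
  set T := Sum.elim (G *ᵥ (y ∘ Sum.inr)) (Gᵀ *ᵥ (y ∘ Sum.inl)) with hT
  have hTy : vnorm T ≤ c * vnorm y := by
    have hc : 0 ≤ c := (specNorm_nonneg G).trans hG
    have h1 := (vnorm_mulVec_le G (y ∘ Sum.inr)).trans
      (mul_le_mul_of_nonneg_right hG (vnorm_nonneg _))
    have h2 := (vnorm_transpose_mulVec_le G (y ∘ Sum.inl)).trans
      (mul_le_mul_of_nonneg_right hG (vnorm_nonneg _))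
    have hy : vnorm y ^ 2 = vnorm (y ∘ Sum.inl) ^ 2 + vnorm (y ∘ Sum.inr) ^ 2 := by
      rw [← sq_vnorm_sumElim, Sum.elim_comp_inl_inr]
    refine vnorm_le_mul_of_sq_le hc ?_
    rw [hT, sq_vnorm_sumElim, hy]
    nlinarith [vnorm_nonneg (G *ᵥ (y ∘ Sum.inr)), vnorm_nonneg (Gᵀ *ᵥ (y ∘ Sum.inl))]
  have hy : y = fromBlocks 1 G Gᵀ 1 *ᵥ y + -T := by
    ext (i | i) <;> simp [hT, fromBlocks_mulVec, add_comm]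
  have := vnorm_add_le (fromBlocks 1 G Gᵀ 1 *ᵥ y) (-T)
  rw [vnorm_neg, ← hy] at this
  linarith

lemma isUnit_det_of_le_vnorm_mulVec {S : Type*} [Fintype S] [DecidableEq S] {A : Matrix S S ℝ}
    (hc : 0 < c) (h : ∀ y, c * vnorm y ≤ vnorm (A *ᵥ y)) : IsUnit A.det := by
  rw [← isUnit_iff_isUnit_det, ← mulVec_injective_iff_isUnit]
  intro y₁ y₂ h₁₂
  by_contra hne
  have := h (y₁ - y₂)
  rw [mulVec_sub, h₁₂, sub_self, vnorm_zero] at this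
  linarith [mul_pos hc (vnorm_pos (sub_ne_zero.mpr hne))]

/-- The paper's `P_N` for `M = (Q, B)`: the projection onto `col B` along `col Q ⊕ (col M)ᗮ`. -/
noncomputable def obliqueProj (Q : Matrix ι a ℝ) (B : Matrix ι b ℝ) : Matrix ι ι ℝ :=
  fromCols (0 : Matrix ι a ℝ) B * ((fromCols Q B)ᵀ * fromCols Q B)⁻¹ * (fromCols Q B)ᵀ

lemma isUnit_det_transpose_fromCols_mul_fromCols (hQ : Qᵀ * Q = 1) (hB : Bᵀ * B = 1)
    (hG : specNorm (Qᵀ * B) ≤ c) (hc : c < 1) :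
    IsUnit ((fromCols Q B)ᵀ * fromCols Q B).det := by
  rw [transpose_fromCols_mul_fromCols hQ hB]
  exact isUnit_det_of_le_vnorm_mulVec (sub_pos.2 hc) (le_vnorm_fromBlocks_mulVec hG)

lemma obliqueProj_mulVec (v : ι → ℝ) :
    obliqueProj Q B *ᵥ v
      = B *ᵥ ((((fromCols Q B)ᵀ * fromCols Q B)⁻¹ *ᵥ ((fromCols Q B)ᵀ *ᵥ v)) ∘ Sum.inr) := by
  rw [obliqueProj, ← mulVec_mulVec, ← mulVec_mulVec, fromCols_mulVec, zero_mulVec, zero_add]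

lemma obliqueProj_mulVec_eq_zero (hQ : Qᵀ * Q = 1) (hB : Bᵀ * B = 1)
    (hG : specNorm (Qᵀ * B) ≤ c) (hc : c < 1) {v : ι → ℝ}
    (hv : Bᵀ *ᵥ v = (Qᵀ * B)ᵀ *ᵥ (Qᵀ *ᵥ v)) : obliqueProj Q B *ᵥ v = 0 := by
  have hMv : (fromCols Q B)ᵀ *ᵥ v
      = ((fromCols Q B)ᵀ * fromCols Q B) *ᵥ Sum.elim (Qᵀ *ᵥ v) 0 := by
    rw [transpose_fromCols_mul_fromCols hQ hB, fromBlocks_mulVec, transpose_fromCols,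
      fromRows_mulVec, hv]
    simp
  rw [obliqueProj_mulVec, hMv, mulVec_mulVec,
    nonsing_inv_mul _ (isUnit_det_transpose_fromCols_mul_fromCols hQ hB hG hc), one_mulVec]
  simp

lemma vnorm_transpose_mulVec_obliqueProj_sub_le (hQ : Qᵀ * Q = 1) (hB : Bᵀ * B = 1)
    (hG : specNorm (Qᵀ * B) ≤ c) (hc : c < 1) (v : ι → ℝ) :
    (1 - c) * vnorm (Bᵀ *ᵥ (obliqueProj Q B *ᵥ v) - Bᵀ *ᵥ v)
      ≤ vnorm (Qᵀ *ᵥ v - (Qᵀ * B) *ᵥ (Bᵀ *ᵥ v)) := by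
  set A := (fromCols Q B)ᵀ * fromCols Q B with hA
  set y := A⁻¹ *ᵥ ((fromCols Q B)ᵀ *ᵥ v) - Sum.elim (0 : a → ℝ) (Bᵀ *ᵥ v)
  have hAy : A *ᵥ y = Sum.elim (Qᵀ *ᵥ v - (Qᵀ * B) *ᵥ (Bᵀ *ᵥ v)) 0 := by
    rw [mulVec_sub, mulVec_mulVec,
      mul_nonsing_inv _ (isUnit_det_transpose_fromCols_mul_fromCols hQ hB hG hc), one_mulVec, hA,
      transpose_fromCols_mul_fromCols hQ hB, fromBlocks_mulVec, transpose_fromCols,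
      fromRows_mulVec]
    ext (i | i) <;> simp
  have hlhs : Bᵀ *ᵥ (obliqueProj Q B *ᵥ v) - Bᵀ *ᵥ v = y ∘ Sum.inr := by
    rw [obliqueProj_mulVec, mulVec_mulVec, hB, one_mulVec]
    ext k
    simp only [y, Function.comp_apply, Pi.sub_apply, Sum.elim_inr]
    rfl
  calc (1 - c) * vnorm (Bᵀ *ᵥ (obliqueProj Q B *ᵥ v) - Bᵀ *ᵥ v)
      ≤ (1 - c) * vnorm y := by
        rw [hlhs]
        exact mul_le_mul_of_nonneg_left (vnorm_comp_le Sum.inr_injective y) (sub_nonneg.2 hc.le)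
    _ ≤ vnorm (A *ᵥ y) := by
        rw [hA, transpose_fromCols_mul_fromCols hQ hB]
        exact le_vnorm_fromBlocks_mulVec hG y
    _ = vnorm (Qᵀ *ᵥ v - (Qᵀ * B) *ᵥ (Bᵀ *ᵥ v)) := by
        rw [hAy]
        simp [vnorm, Fintype.sum_sum_type]

end ObliqueProjection

lemma exists_ne_zero_mulVec_eq_zero_of_card_lt {m k : Type*} [Fintype m] [Fintype k]
    (L : Matrix m k ℝ) (h : Fintype.card m < Fintype.card k) : ∃ y ≠ 0, L *ᵥ y = 0 := by
  obtain ⟨y, hy, hy0⟩ := Submodule.exists_mem_ne_zero_of_ne_bot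
    (L.mulVecLin.ker_ne_bot_of_finrank_lt (by simpa using h))
  exact ⟨y, hy0, hy⟩

/-- The dimension count behind the min–max characterisation of singular values. -/
lemma exists_ne_zero_head_tail_mulVec_eq_zero {p r : ℕ} (hr : r < p)
    (U U' : Matrix (Fin p) (Fin p) ℝ) :
    ∃ y ≠ 0, (∀ i : Fin p, (i : ℕ) < r → (U *ᵥ y) i = 0) ∧
      ∀ i : Fin p, r < (i : ℕ) → (U' *ᵥ y) i = 0 := by
  obtain ⟨y, hy0, hy⟩ := exists_ne_zero_mulVec_eq_zero_of_card_lt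
    (fromRows (U.submatrix (Fin.castLE hr.le) id) (U'.submatrix (tailIdx (r + 1) p) id))
    (by simp; omega)
  rw [fromRows_mulVec] at hy
  refine ⟨y, hy0, fun i hi => congrFun hy (Sum.inl ⟨i, hi⟩), fun i hi => ?_⟩
  obtain ⟨j, rfl⟩ : ∃ j, tailIdx (r + 1) p j = i :=
    ⟨⟨i - (r + 1), by omega⟩, Fin.ext (by simp [tailIdx]; omega)⟩
  exact congrFun hy (Sum.inr j)

section SingularValues

variable {n p K : ℕ} {Z : Matrix (Fin n) (Fin p) ℝ} {W : Matrix (Fin n) (Fin K) ℝ}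
  {U : Matrix (Fin p) (Fin p) ℝ} {V : Matrix (Fin K) (Fin K) ℝ} {σ : ℕ → ℝ}

lemma transpose_mul_eq_of_svd (hSVD : Zᵀ * W = U * rectDiag σ p K * Vᵀ) :
    Wᵀ * Z = V * rectDiag σ K p * Uᵀ := by
  rw [← transpose_transpose (Wᵀ * Z), transpose_mul, transpose_transpose, hSVD]
  simp only [transpose_mul, transpose_transpose, rectDiag_transpose, Matrix.mul_assoc]

lemma transpose_mul_mul_eq_of_svd (hV : Vᵀ * V = 1) (hSVD : Zᵀ * W = U * rectDiag σ p K * Vᵀ) :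
    (W * V)ᵀ * Z = rectDiag σ K p * Uᵀ := by
  rw [transpose_mul, Matrix.mul_assoc, transpose_mul_eq_of_svd hSVD, ← Matrix.mul_assoc,
    ← Matrix.mul_assoc, hV, Matrix.one_mul]

lemma mul_transpose_mul_mul_eq_of_svd (hU : Uᵀ * U = 1) (hV : Vᵀ * V = 1)
    (hSVD : Zᵀ * W = U * rectDiag σ p K * Vᵀ) : (Z * U)ᵀ * (W * V) = rectDiag σ p K := by
  rw [transpose_mul, Matrix.mul_assoc, ← Matrix.mul_assoc Zᵀ, hSVD]
  simp only [Matrix.mul_assoc, hV, Matrix.mul_one]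
  rw [← Matrix.mul_assoc, hU, Matrix.one_mul]

lemma vnorm_transpose_mulVec_mulVec_of_svd (hV : Vᵀ * V = 1)
    (hSVD : Zᵀ * W = U * rectDiag σ p K * Vᵀ) (y : Fin p → ℝ) :
    vnorm (Wᵀ *ᵥ (Z *ᵥ y)) = vnorm (rectDiag σ K p *ᵥ (Uᵀ *ᵥ y)) := by
  rw [mulVec_mulVec, transpose_mul_eq_of_svd hSVD, Matrix.mul_assoc, ← mulVec_mulVec,
    ← mulVec_mulVec, vnorm_mulVec_of_transpose_mul_self hV]

end SingularValues

lemma sq_le_sq_add_specNorm_of_svd {n p K r : ℕ} (hrp : r < p) (hrK : r < K)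
    {Z : Matrix (Fin n) (Fin p) ℝ} {W W' : Matrix (Fin n) (Fin K) ℝ}
    {U U' : Matrix (Fin p) (Fin p) ℝ} {V V' : Matrix (Fin K) (Fin K) ℝ} {σ σ' : ℕ → ℝ}
    (hZ : Zᵀ * Z = 1) (hU : Uᵀ * U = 1) (hV : Vᵀ * V = 1) (hU' : U'ᵀ * U' = 1)
    (hV' : V'ᵀ * V' = 1) (hSVD : Zᵀ * W = U * rectDiag σ p K * Vᵀ)
    (hSVD' : Zᵀ * W' = U' * rectDiag σ' p K * V'ᵀ) (hσ : ∀ i, r ≤ i → |σ i| ≤ σ r)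
    (hσ' : ∀ i ≤ r, σ' r ≤ |σ' i|) (hσ'r : 0 ≤ σ' r) :
    σ' r ^ 2 ≤ σ r ^ 2 + specNorm ((W' * W'ᵀ - W * Wᵀ) * Z) := by
  obtain ⟨y, hy0, hUy, hU'y⟩ := exists_ne_zero_head_tail_mulVec_eq_zero hrp Uᵀ U'ᵀ
  set τ := specNorm ((W' * W'ᵀ - W * Wᵀ) * Z)
  have hupper : vnorm (Wᵀ *ᵥ (Z *ᵥ y)) ≤ σ r * vnorm y := by
    rw [vnorm_transpose_mulVec_mulVec_of_svd hV hSVD,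
      ← vnorm_transpose_mulVec_of_transpose_mul_self hU y]
    refine vnorm_rectDiag_mulVec_le ((abs_nonneg _).trans (hσ r le_rfl)) fun k hk => hσ k ?_
    by_contra h
    exact hk (hUy k (not_le.mp h))
  have hlower : σ' r * vnorm y ≤ vnorm (W'ᵀ *ᵥ (Z *ᵥ y)) := by
    rw [vnorm_transpose_mulVec_mulVec_of_svd hV' hSVD',
      ← vnorm_transpose_mulVec_of_transpose_mul_self hU' y]
    refine le_vnorm_rectDiag_mulVec fun k hk => ?_
    have hkr : (k : ℕ) ≤ r := by
      by_contra h
      exact hk (hU'y k (not_le.mp h))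
    exact ⟨by omega, hσ' k hkr⟩
  have hpert : vnorm (W'ᵀ *ᵥ (Z *ᵥ y)) ^ 2 - vnorm (Wᵀ *ᵥ (Z *ᵥ y)) ^ 2 ≤ τ * vnorm y ^ 2 := by
    rw [sq_vnorm_transpose_mulVec, sq_vnorm_transpose_mulVec, ← dotProduct_sub, ← sub_mulVec,
      mulVec_mulVec]
    calc _ ≤ vnorm (Z *ᵥ y) * vnorm (((W' * W'ᵀ - W * Wᵀ) * Z) *ᵥ y) :=
          (le_abs_self _).trans (abs_dotProduct_le _ _)
      _ ≤ vnorm y * (τ * vnorm y) := by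
          rw [vnorm_mulVec_of_transpose_mul_self hZ]
          exact mul_le_mul_of_nonneg_left (vnorm_mulVec_le _ y) (vnorm_nonneg y)
      _ = τ * vnorm y ^ 2 := by ring
  have h₁ := pow_le_pow_left₀ (by have := vnorm_nonneg y; positivity) hlower 2
  have h₂ := pow_le_pow_left₀ (vnorm_nonneg _) hupper 2
  rw [mul_pow] at h₁ h₂
  have : σ' r ^ 2 * vnorm y ^ 2 ≤ (σ r ^ 2 + τ) * vnorm y ^ 2 := by linarith
  exact le_of_mul_le_mul_right this (by have := vnorm_pos hy0; positivity)

section TailColumnsOfSVD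

variable {n p K r : ℕ} {Z : Matrix (Fin n) (Fin p) ℝ} {W : Matrix (Fin n) (Fin K) ℝ}
  {U : Matrix (Fin p) (Fin p) ℝ} {V : Matrix (Fin K) (Fin K) ℝ} {σ : ℕ → ℝ}

lemma tailCols_transpose_mulVec_of_svd (hV : Vᵀ * V = 1)
    (hSVD : Zᵀ * W = U * rectDiag σ p K * Vᵀ) (w : Fin p → ℝ) :
    (tailCols r (W * V))ᵀ *ᵥ (Z *ᵥ w)
      = rectDiag (fun t => σ (r + t)) (K - r) (p - r) *ᵥ ((Uᵀ *ᵥ w) ∘ tailIdx r p) := by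
  rw [tailCols_transpose_mulVec, mulVec_mulVec, transpose_mul_mul_eq_of_svd hV hSVD,
    ← mulVec_mulVec, rectDiag_mulVec_comp_tailIdx]

lemma tailCols_transpose_mul_tailCols_of_svd (hU : Uᵀ * U = 1) (hV : Vᵀ * V = 1)
    (hSVD : Zᵀ * W = U * rectDiag σ p K * Vᵀ) :
    (tailCols r (Z * U))ᵀ * tailCols r (W * V) = rectDiag (fun t => σ (r + t)) (p - r) (K - r) := by
  rw [tailCols_transpose_mul_tailCols, mul_transpose_mul_mul_eq_of_svd hU hV hSVD,
    rectDiag_submatrix_tailIdx]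

lemma specNorm_tailCols_transpose_mul_tailCols_le (hU : Uᵀ * U = 1) (hV : Vᵀ * V = 1)
    (hSVD : Zᵀ * W = U * rectDiag σ p K * Vᵀ) (hσ : ∀ t, |σ (r + t)| ≤ σ r) :
    specNorm ((tailCols r (Z * U))ᵀ * tailCols r (W * V)) ≤ σ r := by
  rw [tailCols_transpose_mul_tailCols_of_svd hU hV hSVD]
  exact specNorm_rectDiag_le ((abs_nonneg _).trans (by simpa using hσ 0)) hσ

lemma obliqueProj_tailCols_mulVec_eq_zero (hZ : Zᵀ * Z = 1) (hU : Uᵀ * U = 1)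
    (hW : Wᵀ * W = 1) (hV : Vᵀ * V = 1) (hSVD : Zᵀ * W = U * rectDiag σ p K * Vᵀ)
    (hσ : ∀ t, |σ (r + t)| ≤ σ r) (hσ₁ : σ r < 1) (w : Fin p → ℝ) :
    obliqueProj (tailCols r (Z * U)) (tailCols r (W * V)) *ᵥ (Z *ᵥ w) = 0 := by
  refine obliqueProj_mulVec_eq_zero (tailCols_transpose_mul_self (transpose_mul_self_mul hZ hU))
    (tailCols_transpose_mul_self (transpose_mul_self_mul hW hV))
    (specNorm_tailCols_transpose_mul_tailCols_le hU hV hSVD hσ) hσ₁ ?_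
  rw [tailCols_transpose_mulVec_of_svd hV hSVD, tailCols_transpose_mul_tailCols_of_svd hU hV hSVD,
    rectDiag_transpose, tailCols_transpose_mulVec, mulVec_mulVec, transpose_mul,
    Matrix.mul_assoc, hZ, Matrix.mul_one]

lemma vnorm_transpose_mulVec_obliqueProj_tailCols_sub_le (hZ : Zᵀ * Z = 1) (hU : Uᵀ * U = 1)
    (hW : Wᵀ * W = 1) (hV : Vᵀ * V = 1) (hSVD : Zᵀ * W = U * rectDiag σ p K * Vᵀ)
    (hσ : ∀ t, |σ (r + t)| ≤ σ r) (hσ₁ : σ r < 1) {K₀ : ℕ} {W₀ : Matrix (Fin n) (Fin K₀) ℝ}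
    {α : Fin n → ℝ} (hα : (W₀ * W₀ᵀ) *ᵥ α = α) :
    (1 - σ r) * vnorm ((tailCols r (W * V))ᵀ *ᵥ
        (obliqueProj (tailCols r (Z * U)) (tailCols r (W * V)) *ᵥ α) - (tailCols r (W * V))ᵀ *ᵥ α)
      ≤ specNorm ((W * Wᵀ - W₀ * W₀ᵀ) * Z) * vnorm α := by
  refine (vnorm_transpose_mulVec_obliqueProj_sub_le
    (tailCols_transpose_mul_self (transpose_mul_self_mul hZ hU))
    (tailCols_transpose_mul_self (transpose_mul_self_mul hW hV))
    (specNorm_tailCols_transpose_mul_tailCols_le hU hV hSVD hσ) hσ₁ α).trans ?_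
  have hWV : W * V * (W * V)ᵀ = W * Wᵀ := by
    rw [transpose_mul, Matrix.mul_assoc, ← Matrix.mul_assoc V, mul_eq_one_comm.mp hV,
      Matrix.one_mul]
  have hdiff : (tailCols r (Z * U))ᵀ *ᵥ α
        - ((tailCols r (Z * U))ᵀ * tailCols r (W * V)) *ᵥ ((tailCols r (W * V))ᵀ *ᵥ α)
      = ((Z * U)ᵀ *ᵥ ((W₀ * W₀ᵀ - W * Wᵀ) *ᵥ α)) ∘ tailIdx r p := by
    rw [tailCols_transpose_mul_tailCols_of_svd hU hV hSVD, tailCols_transpose_mulVec,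
      tailCols_transpose_mulVec, ← rectDiag_mulVec_comp_tailIdx,
      ← mul_transpose_mul_mul_eq_of_svd hU hV hSVD, mulVec_mulVec, Matrix.mul_assoc, hWV,
      sub_mulVec, hα, mulVec_sub, mulVec_mulVec]
    rfl
  have hsymm : ((W * Wᵀ - W₀ * W₀ᵀ) * Z)ᵀ = -(Zᵀ * (W₀ * W₀ᵀ - W * Wᵀ)) := by
    simp [transpose_mul, transpose_sub, Matrix.mul_sub]
  rw [hdiff]
  calc _ ≤ vnorm ((Z * U)ᵀ *ᵥ ((W₀ * W₀ᵀ - W * Wᵀ) *ᵥ α)) := vnorm_comp_le (tailIdx_injective r p) _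
    _ = vnorm (((W * Wᵀ - W₀ * W₀ᵀ) * Z)ᵀ *ᵥ α) := by
        rw [hsymm, neg_mulVec, vnorm_neg, ← mulVec_mulVec, transpose_mul, ← mulVec_mulVec,
          vnorm_transpose_mulVec_of_transpose_mul_self hU]
    _ ≤ _ := vnorm_transpose_mulVec_le _ _

lemma le_sq_vnorm_mulVec_add_tailCols_mulVec (hZ : Zᵀ * Z = 1) (hU : Uᵀ * U = 1)
    (hW : Wᵀ * W = 1) (hV : Vᵀ * V = 1) (hSVD : Zᵀ * W = U * rectDiag σ p K * Vᵀ)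
    (hσ : ∀ t, |σ (r + t)| ≤ σ r) (w : Fin p → ℝ) (γ : Fin (K - r) → ℝ) :
    (1 - σ r) * vnorm γ ^ 2 ≤ vnorm (Z *ᵥ w + tailCols r (W * V) *ᵥ γ) ^ 2 := by
  have hσr : 0 ≤ σ r := (abs_nonneg _).trans (by simpa using hσ 0)
  refine le_sq_vnorm_add_mulVec (tailCols_transpose_mul_self (transpose_mul_self_mul hW hV)) hσr
    ?_ γ
  rw [tailCols_transpose_mulVec_of_svd hV hSVD, vnorm_mulVec_of_transpose_mul_self hZ]
  calc _ ≤ σ r * vnorm ((Uᵀ *ᵥ w) ∘ tailIdx r p) :=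
        vnorm_rectDiag_mulVec_le hσr fun k _ => hσ k
    _ ≤ σ r * vnorm w := by
        refine mul_le_mul_of_nonneg_left ?_ hσr
        exact (vnorm_comp_le (tailIdx_injective r p) _).trans_eq
          (vnorm_transpose_mulVec_of_transpose_mul_self hU w)

end TailColumnsOfSVD

lemma le_one_sub_of_sq_le_sq_add {σ σ' τ m : ℝ} (hσ : 0 ≤ σ) (hm₀ : 0 ≤ m) (hm : m ≤ 1 - σ)
    (hτ : 40 * τ ≤ m ^ 2) (h : σ' ^ 2 ≤ σ ^ 2 + τ) : 39 / 80 * m ≤ 1 - σ' := by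
  have h₁ : 39 / 40 * m ≤ 1 - σ' ^ 2 := by nlinarith
  nlinarith [sq_nonneg (1 - σ')]

lemma le_three_mul_div_pow_three_mul {e a v τ m σ σ' : ℝ} (he : 0 ≤ e) (hv : 0 ≤ v) (hτ : 0 ≤ τ)
    (hm : 0 < m) (hσ : 0 ≤ σ) (hmσ : m ≤ 1 - σ) (hσ' : 39 / 80 * m ≤ 1 - σ')
    (hbias : (1 - σ') * e ≤ τ * a) (hlow : (1 - σ) * a ^ 2 ≤ v ^ 2) :
    e ≤ 3 * τ / m ^ 3 * v := by
  have hm₁ : m ≤ 1 := by linarith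
  have hma : m * a ≤ v := by
    refine abs_le_of_sq_le_sq' ?_ hv |>.2
    nlinarith [mul_le_mul_of_nonneg_right (show m ^ 2 ≤ 1 - σ by nlinarith) (sq_nonneg a)]
  have h₁ : 39 / 80 * m * e ≤ τ * a := (mul_le_mul_of_nonneg_right hσ' he).trans hbias
  have h₂ : 39 / 80 * m ^ 2 * e ≤ τ * v := by
    nlinarith [mul_le_mul_of_nonneg_left hma hτ, mul_le_mul_of_nonneg_left h₁ hm.le]
  have h₃ : e * m ^ 3 ≤ e * m ^ 2 :=
    mul_le_mul_of_nonneg_left (pow_le_pow_of_le_one hm.le hm₁ (by norm_num)) he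
  rw [div_mul_eq_mul_div, le_div_iff₀ (by positivity)]
  nlinarith [mul_nonneg hτ hv]

lemma vnorm_bias_le_of_svd {n p K r : ℕ} (hrp : r < p) (hrK : r < K)
    {Z : Matrix (Fin n) (Fin p) ℝ} {W W' : Matrix (Fin n) (Fin K) ℝ}
    {U U' : Matrix (Fin p) (Fin p) ℝ} {V V' : Matrix (Fin K) (Fin K) ℝ} {σ σ' : ℕ → ℝ}
    (hZ : Zᵀ * Z = 1) (hW : Wᵀ * W = 1) (hU : Uᵀ * U = 1) (hV : Vᵀ * V = 1)
    (hSVD : Zᵀ * W = U * rectDiag σ p K * Vᵀ) (hW' : W'ᵀ * W' = 1) (hU' : U'ᵀ * U' = 1)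
    (hV' : V'ᵀ * V' = 1) (hSVD' : Zᵀ * W' = U' * rectDiag σ' p K * V'ᵀ)
    (hσ : Antitone σ) (hσ₀ : ∀ i, 0 ≤ σ i) (hσ' : Antitone σ') (hσ'₀ : ∀ i, 0 ≤ σ' i)
    {m : ℝ} (hm : 0 < m) (hmσ : m ≤ 1 - σ r)
    (hτ : 40 * specNorm ((W' * W'ᵀ - W * Wᵀ) * Z) ≤ m ^ 2) (w : Fin p → ℝ)
    (γ : Fin (K - r) → ℝ) :
    vnorm ((tailCols r (W' * V'))ᵀ *ᵥ (obliqueProj (tailCols r (Z * U')) (tailCols r (W' * V'))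
          *ᵥ (Z *ᵥ w + tailCols r (W * V) *ᵥ γ))
        - ((tailCols r (W' * V'))ᵀ * tailCols r (W * V)) *ᵥ γ)
      ≤ 3 * specNorm ((W' * W'ᵀ - W * Wᵀ) * Z) / m ^ 3
        * vnorm (Z *ᵥ w + tailCols r (W * V) *ᵥ γ) := by
  have habs : ∀ i, r ≤ i → |σ i| ≤ σ r := fun i hi => (abs_of_nonneg (hσ₀ i)).trans_le (hσ hi)
  have habs' : ∀ t, |σ' (r + t)| ≤ σ' r := fun t =>
    (abs_of_nonneg (hσ'₀ _)).trans_le (hσ' (Nat.le_add_right r t))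
  have hgap := le_one_sub_of_sq_le_sq_add (hσ₀ r) hm.le hmσ hτ
    (sq_le_sq_add_specNorm_of_svd hrp hrK hZ hU hV hU' hV' hSVD hSVD' habs
      (fun i hi => (hσ' hi).trans (le_abs_self _)) (hσ'₀ r))
  have hσ'₁ : σ' r < 1 := by linarith
  have hB := tailCols_transpose_mul_self (r := r) (transpose_mul_self_mul hW hV)
  have hWWα : (W * Wᵀ) *ᵥ (tailCols r (W * V) *ᵥ γ) = tailCols r (W * V) *ᵥ γ := by
    rw [tailCols_mul, mulVec_mulVec, ← Matrix.mul_assoc, Matrix.mul_assoc W, hW, Matrix.mul_one]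
  have hbias := vnorm_transpose_mulVec_obliqueProj_tailCols_sub_le hZ hU' hW' hV' hSVD' habs'
    hσ'₁ hWWα
  rw [vnorm_mulVec_of_transpose_mul_self hB] at hbias
  rw [mulVec_add, obliqueProj_tailCols_mulVec_eq_zero hZ hU' hW' hV' hSVD' habs' hσ'₁, zero_add,
    ← mulVec_mulVec]
  exact le_three_mul_div_pow_three_mul (vnorm_nonneg _) (vnorm_nonneg _) (specNorm_nonneg _) hm
    (hσ₀ r) hmσ hgap hbias
    (le_sq_vnorm_mulVec_add_tailCols_mulVec hZ hU hW hV hSVD (fun t => habs _ (by omega)) w γ)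
set_option maxHeartbeats 2000000 in
theorem stmt_12 :
    ∃ C : ℝ, 0 < C ∧
    ∀
    (n p K r s : ℕ) (hs : 1 ≤ s) (hrp : r + s ≤ p) (hrK : r + s ≤ K)
    (hpn : p ≤ n) (hKn : K ≤ n)
    (Z : Matrix (Fin n) (Fin p) ℝ) (W : Matrix (Fin n) (Fin K) ℝ)
    (hZ : Zᵀ * Z = 1) (hW : Wᵀ * W = 1)
    (U : Matrix (Fin p) (Fin p) ℝ) (V : Matrix (Fin K) (Fin K) ℝ)
    (hU : Uᵀ * U = 1) (hV : Vᵀ * V = 1)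
    (σ : ℕ → ℝ)
    (hσone : ∀ i, i < r → σ i = 1)
    (hσlt : σ r < 1)
    (hσanti : ∀ i j, i ≤ j → σ j ≤ σ i)
    (hσpos : 0 < σ (r + s - 1))
    (hσzero : ∀ i, r + s ≤ i → σ i = 0)
    (hSVD : Zᵀ * W
      = U * (Matrix.of fun (i : Fin p) (j : Fin K) =>
          if (i : ℕ) = (j : ℕ) then σ (i : ℕ) else 0) * Vᵀ)
    (Zt : Matrix (Fin n) (Fin p) ℝ) (hZt : Zt = Z * U)
    (Wt : Matrix (Fin n) (Fin K) ℝ) (hWt : Wt = W * V)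
    (What : Matrix (Fin n) (Fin K) ℝ) (hWhat : Whatᵀ * What = 1)
    (Uh : Matrix (Fin p) (Fin p) ℝ) (Vh : Matrix (Fin K) (Fin K) ℝ)
    (hUh : Uhᵀ * Uh = 1) (hVh : Vhᵀ * Vh = 1)
    (σh : ℕ → ℝ)
    (hσhanti : ∀ i j, i ≤ j → σh j ≤ σh i)
    (hσhnonneg : ∀ i, 0 ≤ σh i)
    (hSVDh : Zᵀ * What
      = Uh * (Matrix.of fun (i : Fin p) (j : Fin K) =>
          if (i : ℕ) = (j : ℕ) then σh (i : ℕ) else 0) * Vhᵀ)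
    (Zh : Matrix (Fin n) (Fin p) ℝ) (hZh : Zh = Z * Uh)
    (Wbr : Matrix (Fin n) (Fin K) ℝ) (hWbr : Wbr = What * Vh)
    (τ : ℝ) (hτ : τ = specNorm ((What * Whatᵀ - W * Wᵀ) * Z))
    (hgap : 40 * τ ≤ min ((1 - σ r) ^ 2) (σ (r + s - 1) ^ 2))
    (Mh : Matrix (Fin n) (Fin (p - r) ⊕ Fin (K - r)) ℝ)
    (hMhl : ∀ (a : Fin n) (j : Fin (p - r)),
      Mh a (Sum.inl j) = Zh a ⟨r + j.1, by have := j.2; omega⟩)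
    (hMhr : ∀ (a : Fin n) (j : Fin (K - r)),
      Mh a (Sum.inr j) = Wbr a ⟨r + j.1, by have := j.2; omega⟩)
    (PRh PCh PNh : Matrix (Fin n) (Fin n) ℝ)
    (hPRh : PRh = ∑ i ∈ (Finset.range r).attach,
      Matrix.vecMulVec
        (fun a : Fin n => Zh a ⟨i.1, by have := Finset.mem_range.mp i.2; omega⟩)
        (fun a : Fin n => Zh a ⟨i.1, by have := Finset.mem_range.mp i.2; omega⟩))
    (hPCh : PCh = (Matrix.of fun (a : Fin n) (j : Fin (p - r) ⊕ Fin (K - r)) =>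
        Sum.elim (fun j' : Fin (p - r) => Zh a ⟨r + j'.1, by have := j'.2; omega⟩)
                 (fun _ : Fin (K - r) => (0 : ℝ)) j) * (Mhᵀ * Mh)⁻¹ * Mhᵀ)
    (hPNh : PNh = (Matrix.of fun (a : Fin n) (j : Fin (p - r) ⊕ Fin (K - r)) =>
        Sum.elim (fun _ : Fin (p - r) => (0 : ℝ))
                 (fun j' : Fin (K - r) => Wbr a ⟨r + j'.1, by have := j'.2; omega⟩) j)
        * (Mhᵀ * Mh)⁻¹ * Mhᵀ)
    (X : Matrix (Fin n) (Fin p) ℝ)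
    (hXcol : LinearMap.range X.mulVecLin = LinearMap.range Z.mulVecLin)
    (hXinv : IsUnit (Xᵀ * X).det)
    (β θ : Fin p → ℝ) (α : Fin n → ℝ)
    (hθmem : X.mulVec θ ∈ Submodule.span ℝ (Set.range (fun j : Fin r =>
        fun a : Fin n => Zt a ⟨j.1, by have := j.2; omega⟩)))
    (hβmem : X.mulVec β ∈ Submodule.span ℝ (Set.range (fun j : Fin (p - r) =>
        fun a : Fin n => Zt a ⟨r + j.1, by have := j.2; omega⟩)))
    (hαmem : α ∈ Submodule.span ℝ (Set.range (fun j : Fin (K - r) =>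
        fun a : Fin n => Wt a ⟨r + j.1, by have := j.2; omega⟩)))
    (Wt2 : Matrix (Fin n) (Fin (K - r)) ℝ)
    (hWt2 : ∀ (a : Fin n) (j : Fin (K - r)), Wt2 a j = Wt a ⟨r + j.1, by have := j.2; omega⟩)
    (Wbr2 : Matrix (Fin n) (Fin (K - r)) ℝ)
    (hWbr2 : ∀ (a : Fin n) (j : Fin (K - r)), Wbr2 a j = Wbr a ⟨r + j.1, by have := j.2; omega⟩)
    (γ : Fin (K - r) → ℝ) (hγ : γ = Wt2ᵀ.mulVec α)
    (O : Matrix (Fin (K - r)) (Fin (K - r)) ℝ) (hO : O = Wbr2ᵀ * Wt2),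
    vnorm (Wbr2ᵀ.mulVec (PNh.mulVec (X.mulVec β + X.mulVec θ + α)) - O.mulVec γ)
      ≤ C * τ / min ((1 - σ r) ^ 3) (σ (r + s - 1) ^ 3)
          * vnorm (X.mulVec β + X.mulVec θ + α) := by
  refine ⟨3, by norm_num, ?_⟩
  intro n p K r s hs hrp hrK _ _ Z W hZ hW U V hU hV σ _ hσlt hσanti hσpos hσzero hSVD _ _ Wt hWt
    What hWhat Uh Vh hUh hVh σh hσhanti hσhnonneg hSVDh Zh hZh Wbr hWbr τ hτ hgap Mh hMhl hMhr
    _ _ PNh _ _ hPNh X hXcol _ β θ α _ _ hαmem Wt2 hWt2 Wbr2 hWbr2 γ hγ O hO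
  subst hZh hWbr hWt hγ hO
  obtain rfl : Wt2 = tailCols r (W * V) := by ext a j; exact hWt2 a j
  obtain rfl : Wbr2 = tailCols r (What * Vh) := by ext a j; exact hWbr2 a j
  obtain rfl : Mh = fromCols (tailCols r (Z * Uh)) (tailCols r (What * Vh)) := by
    ext a (j | j)
    exacts [hMhl a j, hMhr a j]
  obtain rfl : PNh = obliqueProj (tailCols r (Z * Uh)) (tailCols r (What * Vh)) := hPNh
  obtain ⟨w, hw⟩ : X *ᵥ β + X *ᵥ θ ∈ LinearMap.range Z.mulVecLin :=
    hXcol ▸ ⟨β + θ, by simp [mulVec_add]⟩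
  obtain ⟨γ, rfl⟩ : α ∈ LinearMap.range (tailCols r (W * V)).mulVecLin := by
    rw [range_mulVecLin]
    exact hαmem
  simp only [← hw, mulVecLin_apply]
  have hσ₀ : ∀ i, 0 ≤ σ i := fun i =>
    hσzero (i + r + s) (by omega) ▸ hσanti i (i + r + s) (by omega)
  set m := min (1 - σ r) (σ (r + s - 1)) with hm
  have hτm : 40 * τ ≤ m ^ 2 := by
    rcases min_choice (1 - σ r) (σ (r + s - 1)) with h | h <;> rw [hm, h]
    exacts [hgap.trans (min_le_left _ _), hgap.trans (min_le_right _ _)]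
  rw [show min ((1 - σ r) ^ 3) (σ (r + s - 1) ^ 3) = m ^ 3 from
      (Odd.strictMono_pow (by decide)).monotone.map_min.symm, hτ, mulVec_mulVec γ,
    tailCols_transpose_mul_self (transpose_mul_self_mul hW hV), one_mulVec]
  exact vnorm_bias_le_of_svd (by omega) (by omega) hZ hW hU hV hSVD hWhat hUh hVh hSVDh
    hσanti hσ₀ hσhanti hσhnonneg
    (lt_min (by linarith) hσpos) (min_le_left _ _) (hτ ▸ hτm) w γ
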